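/- A subset of ℝ is ρ-statistically downward compact if and only if it is statistically downward compact (i.e., the compactness notions obtained from (ρ_n) and from ρ_n = n coincide). -/

import Mathlib

open Filter Pointwise

/-- Number of indices `k ≤ n` with `α (k+1) - α k ≥ ε`. -/
noncomputable def dCount (α : ℕ → ℝ) (ε : ℝ) (n : ℕ) : ℕ :=
  ((Finset.range (n + 1)).filter (fun k => ε ≤ α (k + 1) - α k)).card

/-- Number of indices `k ≤ n` with `|α (k+1) - α k| ≥ ε`. -/
noncomputable def aCount (α : ℕ → ℝ) (ε : ℝ) (n : ℕ) : ℕ :=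
  ((Finset.range (n + 1)).filter (fun k => ε ≤ |α (k + 1) - α k|)).card

/-- Number of indices `k ≤ n` with `|α k - L| ≥ ε`. -/
noncomputable def cCount (α : ℕ → ℝ) (L ε : ℝ) (n : ℕ) : ℕ :=
  ((Finset.range (n + 1)).filter (fun k => ε ≤ |α k - L|)).card

/-- `α` is ρ-statistically downward quasi-Cauchy. -/
def RDQC (ρ α : ℕ → ℝ) : Prop :=
  ∀ ε : ℝ, 0 < ε → Tendsto (fun n => (dCount α ε n : ℝ) / ρ n) atTop (nhds 0)

/-- `α` is ρ-statistically quasi-Cauchy (with absolute value). -/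
def RQC (ρ α : ℕ → ℝ) : Prop :=
  ∀ ε : ℝ, 0 < ε → Tendsto (fun n => (aCount α ε n : ℝ) / ρ n) atTop (nhds 0)

/-- `α` is ρ-statistically convergent to `L`. -/
def RStatConv (ρ α : ℕ → ℝ) (L : ℝ) : Prop :=
  ∀ ε : ℝ, 0 < ε → Tendsto (fun n => (cCount α L ε n : ℝ) / ρ n) atTop (nhds 0)

/-- `E` is ρ-statistically downward compact. -/
def DCompact (ρ : ℕ → ℝ) (E : Set ℝ) : Prop :=
  ∀ α : ℕ → ℝ, (∀ k, α k ∈ E) → ∃ φ : ℕ → ℕ, StrictMono φ ∧ RDQC ρ (α ∘ φ)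

/-- `f` is ρ-statistically downward continuous on `E`. -/
def DownCont (ρ : ℕ → ℝ) (E : Set ℝ) (f : ℝ → ℝ) : Prop :=
  ∀ α : ℕ → ℝ, (∀ k, α k ∈ E) → RDQC ρ α → RDQC ρ (fun k => f (α k))

/-!
Both notions coincide with being bounded above, as soon as `ρ n → ∞` and `ρ n = O(n)`.
Every real sequence has a monotone subsequence. In a set bounded above, a nondecreasing
subsequence converges and a nonincreasing one has no upward steps; either way only finitely
many steps are `≥ ε`, a count that is negligible against `ρ n → ∞`. A set unbounded above
contains a sequence any two terms of which are at least `1` apart in increasing order, so each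
of its subsequences has `n + 1` upward steps `≥ 1` among the first `n + 1`, which is not
`o(ρ n)` since `ρ n = O(n)`.
-/

open Topology

lemma exists_strictMono_subseq_monotone_or_antitone {α : Type*} [LinearOrder α] (f : ℕ → α) :
    ∃ φ : ℕ → ℕ, StrictMono φ ∧ (Monotone (f ∘ φ) ∨ Antitone (f ∘ φ)) := by
  obtain ⟨g, hle | hlt⟩ := exists_increasing_or_nonincreasing_subseq (· ≤ ·) f
  · exact ⟨g, g.strictMono, .inl (monotone_iff_forall_lt.2 fun m n hmn => hle m n hmn)⟩
  · exact ⟨g, g.strictMono,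
      .inr (antitone_iff_forall_lt.2 fun m n hmn => (not_le.1 (hlt m n hmn)).le)⟩

lemma dCount_le_of_forall_ge_sub_lt {β : ℕ → ℝ} {ε : ℝ} {N : ℕ}
    (hN : ∀ k ≥ N, β (k + 1) - β k < ε) (n : ℕ) : dCount β ε n ≤ N := by
  have hsub :
      (Finset.range (n + 1)).filter (fun k => ε ≤ β (k + 1) - β k) ⊆ Finset.range N := by
    intro k hk
    simp only [Finset.mem_filter, Finset.mem_range] at hk ⊢
    by_contra! hNk
    exact (hN k hNk).not_ge hk.2
  simpa [dCount] using Finset.card_le_card hsub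

lemma dCount_eq_of_forall_le_sub {β : ℕ → ℝ} {ε : ℝ} (h : ∀ k, ε ≤ β (k + 1) - β k)
    (n : ℕ) : dCount β ε n = n + 1 := by
  rw [dCount, Finset.filter_true_of_mem fun k _ => h k, Finset.card_range]

section RDQC

variable {ρ β : ℕ → ℝ}

lemma rdqc_of_eventually_sub_lt (htop : Tendsto ρ atTop atTop)
    (h : ∀ ε > 0, ∀ᶠ k in atTop, β (k + 1) - β k < ε) : RDQC ρ β := by
  intro ε hε
  obtain ⟨N, hN⟩ := eventually_atTop.1 (h ε hε)
  have hρpos : ∀ᶠ n in atTop, 0 < ρ n := htop.eventually_gt_atTop 0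
  refine squeeze_zero' (hρpos.mono fun n hn => by positivity)
    (hρpos.mono fun n hn => ?_) (tendsto_const_nhds (x := (N : ℝ)).div_atTop htop)
  gcongr
  exact_mod_cast dCount_le_of_forall_ge_sub_lt hN n

lemma rdqc_of_tendsto {a : ℝ} (htop : Tendsto ρ atTop atTop) (hβ : Tendsto β atTop (𝓝 a)) :
    RDQC ρ β := by
  have hsteps : Tendsto (fun k => β (k + 1) - β k) atTop (𝓝 0) := by
    simpa using (hβ.comp (tendsto_add_atTop_nat 1)).sub hβ
  exact rdqc_of_eventually_sub_lt htop fun ε hε => hsteps.eventually (gt_mem_nhds hε)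

lemma rdqc_of_antitone (htop : Tendsto ρ atTop atTop) (hβ : Antitone β) : RDQC ρ β :=
  rdqc_of_eventually_sub_lt htop fun _ hε =>
    .of_forall fun k => (sub_nonpos.2 (hβ k.le_succ)).trans_lt hε

lemma not_rdqc_of_forall_one_le_sub (hpos : ∀ᶠ n in atTop, 0 < ρ n)
    (hratio : ∃ C : ℝ, ∀ᶠ n in atTop, ρ n / (n : ℝ) ≤ C)
    (h : ∀ k, 1 ≤ β (k + 1) - β k) : ¬ RDQC ρ β := by
  intro hβ
  obtain ⟨C, hC⟩ := hratio
  set D := max C 1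
  have hD : 0 < D := lt_max_of_lt_right one_pos
  have hlower : ∀ᶠ n in atTop, 1 / D ≤ (dCount β 1 n : ℝ) / ρ n := by
    filter_upwards [hpos, hC, eventually_ge_atTop 1] with n hρ hCn hn
    have hn : (0 : ℝ) < n := by exact_mod_cast hn
    have hρn : ρ n ≤ C * n := (div_le_iff₀ hn).1 hCn
    rw [dCount_eq_of_forall_le_sub h, div_le_div_iff₀ hD hρ]
    push_cast
    nlinarith [le_max_left C 1]
  exact (one_div_pos.2 hD).not_ge (ge_of_tendsto (hβ 1 one_pos) hlower)

end RDQC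

lemma exists_seq_add_one_le_of_not_bddAbove {E : Set ℝ} (hE : ¬ BddAbove E) :
    ∃ α : ℕ → ℝ, (∀ k, α k ∈ E) ∧ ∀ ⦃l m : ℕ⦄, l < m → α l + 1 ≤ α m := by
  choose g hgE hg using fun x : ℝ => not_bddAbove_iff.1 hE (x + 1)
  set α : ℕ → ℝ := fun k => g^[k + 1] 0
  have hstep : ∀ k, α (k + 1) = g (α k) := fun k =>
    Function.iterate_succ_apply' g (k + 1) 0
  have hmono : Monotone fun k => α k - k := monotone_nat_of_le_succ fun k => by
    have := hg (α k)
    rw [← hstep] at this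
    push_cast
    linarith
  refine ⟨α, fun k => ?_, fun l m hlm => ?_⟩
  · simpa only [α, Function.iterate_succ_apply'] using hgE _
  · have hlm' : (l : ℝ) + 1 ≤ m := by exact_mod_cast hlm
    linarith [hmono hlm.le]

section DCompact

variable {ρ : ℕ → ℝ} {E : Set ℝ}

lemma dcompact_of_bddAbove (htop : Tendsto ρ atTop atTop) (hE : BddAbove E) :
    DCompact ρ E := by
  intro α hα
  obtain ⟨φ, hφ, hmono | hanti⟩ := exists_strictMono_subseq_monotone_or_antitone α
  · obtain ⟨M, hM⟩ := hE
    have hbdd : BddAbove (Set.range (α ∘ φ)) := ⟨M, by rintro _ ⟨k, rfl⟩; exact hM (hα _)⟩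
    exact ⟨φ, hφ, rdqc_of_tendsto htop (tendsto_atTop_ciSup hmono hbdd)⟩
  · exact ⟨φ, hφ, rdqc_of_antitone htop hanti⟩

lemma bddAbove_of_dcompact (hpos : ∀ᶠ n in atTop, 0 < ρ n)
    (hratio : ∃ C : ℝ, ∀ᶠ n in atTop, ρ n / (n : ℝ) ≤ C) (h : DCompact ρ E) :
    BddAbove E := by
  by_contra hE
  obtain ⟨α, hαE, hgap⟩ := exists_seq_add_one_le_of_not_bddAbove hE
  obtain ⟨φ, hφ, hrdqc⟩ := h α hαE
  refine not_rdqc_of_forall_one_le_sub hpos hratio (fun k => ?_) hrdqc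
  simp only [Function.comp_apply]
  linarith [hgap (hφ k.lt_succ_self)]

lemma dcompact_iff_bddAbove (htop : Tendsto ρ atTop atTop)
    (hratio : ∃ C : ℝ, ∀ᶠ n in atTop, ρ n / (n : ℝ) ≤ C) : DCompact ρ E ↔ BddAbove E :=
  ⟨bddAbove_of_dcompact (htop.eventually_gt_atTop 0) hratio, dcompact_of_bddAbove htop⟩

end DCompact

theorem dcompact_iff_stat_dcompact_general (ρ : ℕ → ℝ)
    (htop : Tendsto ρ atTop atTop)
    (hratio : ∃ C : ℝ, ∀ᶠ n in atTop, ρ n / (n : ℝ) ≤ C) (E : Set ℝ) :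
    DCompact ρ E ↔ DCompact (fun n => (n : ℝ)) E := by
  have hratio_id : ∃ C : ℝ, ∀ᶠ n : ℕ in atTop, (n : ℝ) / (n : ℝ) ≤ C :=
    ⟨1, .of_forall fun n => div_self_le_one _⟩
  rw [dcompact_iff_bddAbove htop hratio,
    dcompact_iff_bddAbove tendsto_natCast_atTop_atTop hratio_id]

theorem dcompact_iff_stat_dcompact (ρ : ℕ → ℝ) (hpos : ∀ n, 0 < ρ n) (hmono : Monotone ρ)
    (htop : Tendsto ρ atTop atTop)
    (hratio : ∃ C : ℝ, ∀ᶠ n in atTop, ρ n / (n : ℝ) ≤ C)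
    (hdiff : ∃ M : ℝ, ∀ n, |ρ (n + 1) - ρ n| ≤ M) (E : Set ℝ) :
    DCompact ρ E ↔ DCompact (fun n => (n : ℝ)) E :=
  dcompact_iff_stat_dcompact_general ρ htop hratio E
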